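/- arXiv:math/0112119 — 3 statements merged into one kernel-verified Lean document; each statement's English description precedes it below -/
import Mathlib

section
/- In the algebra A generated by a, β, γ, d subject to the GL_h(1|1) relations (with a, d even and invertible, β, γ odd, h odd with h² = 0 and h anticommuting with β and γ), the quantum superdeterminant D_h = a d⁻¹ − β d⁻¹ γ d⁻¹ commutes with each of the generators a, β, γ, d. -/
set_option maxHeartbeats 4000000 in
/-- In the GL_h(1|1) algebra, the quantum superdeterminant
`D_h = a d⁻¹ − β d⁻¹ γ d⁻¹` commutes with each of the generators `a, β, γ, d`. -/
theorem stmt1 (R : Type*) [Ring R]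
    (a β γ d h ai di Dh Di : R)
    (h2 : h * h = 0) (hhb : h * β = -(β * h)) (hhg : h * γ = -(γ * h))
    (hha : h * a = a * h) (hhd : h * d = d * h)
    (hai : a * ai = 1) (hia : ai * a = 1)
    (hdi : d * di = 1) (hid : di * d = 1)
    (hDh : Dh = a * di - β * di * γ * di)
    (hDu : Dh * Di = 1) (hDu' : Di * Dh = 1)
    (r1 : a * β = β * a)
    (r2 : a * γ = γ * a + h * (a * a) * (1 - Di))
    (r3 : d * β = β * d)
    (r4 : d * γ = γ * d + h * (d * d) * (Dh - 1))
    (r5 : β * β = 0)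
    (r6 : γ * γ = h * (γ * d) * (1 - Dh))
    (r7 : β * γ = -(γ * β) + h * (β * d) * (1 - Dh))
    (r8 : a * d = d * a + h * (β * d) * (Dh - 1)) :
    Dh * a = a * Dh ∧ Dh * β = β * Dh ∧ Dh * γ = γ * Dh ∧ Dh * d = d * Dh := by
  have Ldih : di * h = h * di := by
    linear_combination (norm := noncomm_ring) (di) * hdi * (h * d * di)
      - (di * d * h) * hid * (di)
      + (di) * hhd * (di)
      - (1) * hid * (di * h * d * di - h * di * d * di)
      - (di * h - h * di) * hdi * (1)
  have Laih : ai * h = h * ai := by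
    linear_combination (norm := noncomm_ring) (ai) * hai * (h * a * ai)
      - (ai * a * h) * hia * (ai)
      + (ai) * hha * (ai)
      - (1) * hia * (ai * h * a * ai - h * ai * a * ai)
      - (ai * h - h * ai) * hai * (1)
  have Ldib : di * β = β * di := by
    linear_combination (norm := noncomm_ring) (di) * hdi * (β * d * di)
      - (di * d * β) * hid * (di)
      - (di) * r3 * (di)
      - (1) * hid * (di * β * d * di - β * di * d * di)
      - (di * β - β * di) * hdi * (1)
  have Laib : ai * β = β * ai := by
    linear_combination (norm := noncomm_ring) (ai) * hai * (β * a * ai)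
      - (ai * a * β) * hia * (ai)
      - (ai) * r1 * (ai)
      - (1) * hia * (ai * β * a * ai - β * ai * a * ai)
      - (ai * β - β * ai) * hai * (1)
  have Ldia : di * a = a * di - h * β * di + h * β * Dh * di := by
    linear_combination (norm := noncomm_ring) -(di * d * h * β) * hDh * (di * d * di)
      + (di * d * h) * r5 * (di * γ * di * di * d * di)
      + (di) * hdi * (a * d * di)
      - (di * d * a) * hid * (di)
      + (di * d * h * β) * hid * (di)
      - (di * d * h * β * a * di) * hid * (di)
      - (di) * hhd * (β * di)
      + (di) * hhd * (β * a * di * di)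
      + (di * h) * r3 * (di)
      - (di * h) * r3 * (a * di * di)
      + (di) * r8 * (di)
      + (di * h * β * d) * hDh * (di)
      - (di * h * β) * r3 * (di * γ * di * di)
      - (di * h) * r5 * (d * di * γ * di * di)
      - (1) * hid * (di * a * d * di - a * di * d * di + h * β * di * d * di - h * β * Dh * di * d * di)
      - (di * a - a * di + h * β * di - h * β * Dh * di) * hdi * (1)
  have Ldai : d * ai = ai * d - h * β * ai * d * ai + h * β * ai * d * Dh * ai := by
    linear_combination (norm := noncomm_ring) -(ai * a * h * β * ai * d) * hDh * (ai * a * ai)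
      - (ai) * hai * (d * a * ai)
      + (ai * a * d) * hia * (ai)
      + (ai * a * h * β * ai * d) * hia * (ai)
      - (ai * a * h * β * ai * d * a * di) * hia * (ai)
      + (ai * a * h * β * ai * d * β * di * γ * di) * hia * (ai)
      - (ai) * hha * (β * ai * d * ai)
      + (ai) * hha * (β * ai * d * a * di * ai)
      - (ai) * hha * (β * ai * d * β * di * γ * di * ai)
      + (ai * h) * r1 * (ai * d * ai)
      + (ai * h * β) * hai * (d * ai)
      - (ai * h) * r1 * (ai * d * a * di * ai)
      - (ai * h * β) * hai * (d * a * di * ai)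
      + (ai * h) * r1 * (ai * d * β * di * γ * di * ai)
      + (ai * h * β) * hai * (d * β * di * γ * di * ai)
      + (ai) * r8 * (ai)
      + (ai * h * β * d) * hDh * (ai)
      - (1) * hia * (-ai * d * a * ai + d * ai * a * ai + h * β * ai * d * ai * a * ai - h * β * ai * d * Dh * ai * a * ai)
      - (-ai * d + d * ai + h * β * ai * d * ai - h * β * ai * d * Dh * ai) * hai * (1)
  have Ldiai : di * ai = ai * di + h * β * ai * di * ai - h * β * ai * Dh * di * ai := by
    linear_combination (norm := noncomm_ring) (ai * a * h * β * ai) * hDh * (di * ai * a * ai)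
      - (ai) * hai * (di * a * ai)
      + (ai * a * di) * hia * (ai)
      - (ai * a * h * β * ai * di) * hia * (ai)
      + (ai * a * h * β) * hia * (di * di * ai * a * ai)
      - (ai * a * h * β * ai * β * di * γ * di * di) * hia * (ai)
      + (ai * a * h * β * di * di) * hia * (ai)
      + (ai) * hha * (β * ai * di * ai)
      + (ai) * hha * (β * ai * β * di * γ * di * di * ai)
      - (ai) * hha * (β * di * di * ai)
      - (ai * h) * r1 * (ai * di * ai)
      - (ai * h * β) * hai * (di * ai)
      - (ai * h) * r1 * (ai * β * di * γ * di * di * ai)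
      - (ai * h * β) * hai * (β * di * γ * di * di * ai)
      + (ai * h) * r1 * (di * di * ai)
      - (ai) * Ldia * (ai)
      - (ai * h * β) * hDh * (di * ai)
      - (1) * hia * (-ai * di * a * ai + di * ai * a * ai - h * β * ai * di * ai * a * ai + h * β * ai * Dh * di * ai * a * ai)
      - (-ai * di + di * ai - h * β * ai * di * ai + h * β * ai * Dh * di * ai) * hai * (1)
  have Ldig : di * γ = γ * di + h * d * di - h * d * Dh * di := by
    linear_combination (norm := noncomm_ring) (di * d * h * d) * hDh * (di * d * di)
      + (di) * hdi * (γ * d * di)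
      - (di * d * h) * hdi * (d * di)
      - (di * d * γ) * hid * (di)
      + (di * d * h * d * a * di) * hid * (di)
      - (di * d * h * d * β * di * γ * di) * hid * (di)
      + (di) * hhd * (d * di)
      - (di) * hhd * (d * a * di * di)
      + (di) * hhd * (d * β * di * γ * di * di)
      - (di) * r4 * (di)
      - (di * h * d * d) * hDh * (di)
      - (1) * hid * (di * γ * d * di - γ * di * d * di - h * d * di * d * di + h * d * Dh * di * d * di)
      - (di * γ - γ * di - h * d * di + h * d * Dh * di) * hdi * (1)
  have LhX : h * Dh = Dh * h := by
    linear_combination (norm := noncomm_ring) (h) * hDh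
      - hDh * (h)
      - (a) * Ldih
      + hha * (di)
      + (β * di * γ) * Ldih
      + (β * di) * hhg * (di)
      - (β) * Ldih * (γ * di)
      - hhb * (di * γ * di)
  have LaigY : ai * γ = γ * ai - h + h * a * Di * ai := by
    linear_combination (norm := noncomm_ring) (ai) * hai * (γ * a * ai)
      - (ai * a * γ) * hia * (ai)
      - (ai * a * h * a * Di) * hia * (ai)
      - (ai) * hha * (a * ai)
      + (ai) * hha * (a * Di * ai)
      - (ai) * r2 * (ai)
      - (1) * hia * (ai * γ * a * ai - γ * ai * a * ai + h * a * ai - h * a * Di * ai * a * ai)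
      - (ai * γ - γ * ai + h - h * a * Di * ai) * hai * (1)
  have LhY : h * Di = h * ai * d + h * β * γ * ai * ai := by
    linear_combination (norm := noncomm_ring) -(h * ai * d) * hDh * (Di)
      - (h * β * γ * ai * ai) * hDh * (Di)
      - (h * β * γ * ai) * hia * (di * Di)
      + (h * ai) * r3 * (di * γ * di * Di)
      + (h * ai * β) * hdi * (γ * di * Di)
      + (h * ai) * r8 * (di * Di)
      + (h * ai * h * β * d) * hDh * (di * Di)
      - (h) * hia * (d * di * Di)
      - (h * ai * h * β) * hdi * (Di)
      - (h) * hdi * (Di)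
      - (h * ai * h * β) * r3 * (di * γ * di * di * Di)
      - (h * ai * h) * r5 * (d * di * γ * di * di * Di)
      - (h * ai * h * β) * r8 * (di * di * Di)
      - (h * ai * h * β * h * β * d) * hDh * (di * di * Di)
      + (h * ai * h * β * a) * hdi * (di * Di)
      + (h * ai * h * β * h * β) * hdi * (di * Di)
      - (h * ai * h) * hhb * (β * d * a * di * di * di * Di)
      + (h * ai) * h2 * (β * β * d * a * di * di * di * Di)
      + (h * ai * h) * hhb * (β * d * β * di * γ * di * di * di * Di)
      - (h * ai) * h2 * (β * β * d * β * di * γ * di * di * di * Di)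
      + (h * ai * h) * hhb * (β * di * Di)
      - (h * ai) * h2 * (β * β * di * Di)
      - (h) * Laih * (β * Di)
      - h2 * (ai * β * Di)
      + (h) * Laih * (β * a * di * Di)
      + h2 * (ai * β * a * di * Di)
      + (h * β * γ * ai) * Laib * (di * γ * di * Di)
      + (h) * Laib * (γ * di * Di)
      + (h * β * γ) * Laib * (ai * di * γ * di * Di)
      + (h * β) * r7 * (ai * ai * di * γ * di * Di)
      - (h) * r5 * (γ * ai * ai * di * γ * di * Di)
      - (h * β * h * β * d) * hDh * (ai * ai * di * γ * di * Di)
      + (h) * hhb * (β * d * ai * ai * di * γ * di * Di)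
      - h2 * (β * β * d * ai * ai * di * γ * di * Di)
      - (h) * hhb * (β * d * a * di * ai * ai * di * γ * di * Di)
      + h2 * (β * β * d * a * di * ai * ai * di * γ * di * Di)
      + (h) * hhb * (β * d * β * di * γ * di * ai * ai * di * γ * di * Di)
      - h2 * (β * β * d * β * di * γ * di * ai * ai * di * γ * di * Di)
      + (h * β) * LaigY * (di * Di)
      - (h) * hhb * (di * Di)
      + h2 * (β * di * Di)
      + (h) * hhb * (a * Di * ai * di * Di)
      - h2 * (β * a * Di * ai * di * Di)
      + (h * ai * d + h * β * γ * ai * ai) * hDu * (1)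
  have LY1 : h * a * a * Di = h * a * d + h * β * γ := by
    linear_combination (norm := noncomm_ring) (a) * hha * (Di)
      - (a) * hha * (ai * d)
      + (a * h) * hai * (d)
      - (a) * hha * (β * γ * ai * ai)
      + hha * (a * Di)
      - hha * (d)
      - hha * (a * β * γ * ai * ai)
      + (h * a) * r1 * (γ * ai * ai)
      + (h) * r1 * (a * γ * ai * ai)
      + (h * β * a) * r2 * (ai * ai)
      + (h * β * a * γ) * hai * (ai)
      + (h * β * a * h * a) * hai * (ai)
      + (h * β * a * h) * hai
      + (h * β) * hha * (a * a * Di * ai * ai)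
      - (h) * hhb * (a * a * a * Di * ai * ai)
      + h2 * (β * a * a * a * Di * ai * ai)
      - (h * β) * hha
      + 2 * (h) * hhb * (a)
      - 2 * h2 * (β * a)
      + (h * β) * r2 * (ai)
      + (h * β * γ) * hai
      + (h * β * h * a) * hai
      - (h) * hhb * (a * a * Di * ai)
      + h2 * (β * a * a * Di * ai)
      + (a * a) * LhY
  have r2p : a * γ = γ * a + h * a * a - h * a * d - h * β * γ := by
    linear_combination (norm := noncomm_ring) r2
      - LY1
  have Laig : ai * γ = γ * ai - h + h * β * γ * ai * ai + h * d * ai := by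
    linear_combination (norm := noncomm_ring) (ai) * hai * (γ * a * ai)
      - (ai * a * γ) * hia * (ai)
      - (ai * a * h * d) * hia * (ai)
      - (ai * a * h * β * γ * ai) * hia * (ai)
      - (ai) * hha * (a * ai)
      + (ai) * hha * (d * ai)
      + (ai) * hha * (β * γ * ai * ai)
      - (ai * h) * r1 * (γ * ai * ai)
      - (ai) * r2p * (ai)
      - (ai * h * β) * r2p * (ai * ai)
      - (ai * h * β * γ) * hai * (ai)
      - (ai * h * β * h * a) * hai * (ai)
      + (ai * h) * hhb * (a * d * ai * ai)
      - (ai) * h2 * (β * a * d * ai * ai)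
      + (ai * h) * hhb * (β * γ * ai * ai)
      - (ai) * h2 * (β * β * γ * ai * ai)
      - (ai * h) * hhb * (a * ai)
      + (ai) * h2 * (β * a * ai)
      - (1) * hia * (ai * γ * a * ai - γ * ai * a * ai + h * a * ai - h * β * γ * ai * ai * a * ai - h * d * ai * a * ai)
      - (ai * γ - γ * ai + h - h * β * γ * ai * ai - h * d * ai) * hai * (1)
  have g1 : Dh * a = a * Dh := by
    linear_combination (norm := noncomm_ring) hDh * (a)
      - (a) * hDh
      + r1 * (di * γ * di)
      + (a) * Ldia
      + (a * h * β) * hDh * (di)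
      - (a * h) * r5 * (di * γ * di * di)
      + hha * (β * di)
      - hha * (β * a * di * di)
      - (h) * r1 * (di)
      + (h) * r1 * (a * di * di)
      - (β * di * γ) * Ldia
      - (β * di * γ * h * β) * hDh * (di)
      + (β * di * γ * h) * r5 * (di * γ * di * di)
      + (β * di) * hhg * (β * di)
      - (β * di) * hhg * (β * a * di * di)
      - (β * di * h) * r7 * (di)
      - (β * di) * h2 * (β * d * di)
      + (β * di) * h2 * (β * d * Dh * di)
      + (β * di * h) * r7 * (a * di * di)
      + (β * di) * h2 * (β * d * a * di * di)
      - (β * di) * h2 * (β * d * Dh * a * di * di)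
      + (β) * Ldih * (β * γ * di)
      + hhb * (di * β * γ * di)
      - (β) * Ldih * (β * γ * a * di * di)
      - hhb * (di * β * γ * a * di * di)
      - (h * β) * Ldib * (γ * di)
      - (h) * r5 * (di * γ * di)
      + (h * β) * Ldib * (γ * a * di * di)
      + (h) * r5 * (di * γ * a * di * di)
      + (β * a) * Ldig * (di)
      - (β * a * h * d) * hDh * (di * di)
      + (β * a * h) * hdi * (di)
      + (β) * hha * (d * a * di * di * di)
      - hhb * (a * d * a * di * di * di)
      - (β) * hha * (d * β * di * γ * di * di * di)
      + hhb * (a * d * β * di * γ * di * di * di)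
      - (β) * hha * (di)
      - hhb * (a * di)
      - (h * β * a) * r3 * (di * γ * di * di * di)
      - (h * β * a * β) * hdi * (γ * di * di * di)
      - (h * β) * r1 * (γ * di * di * di)
      - (h) * r5 * (a * γ * di * di * di)
      - (h * β * a) * r8 * (di * di * di)
      - (h * β * a * h * β * d) * hDh * (di * di * di)
      + (h * β * a * a) * hdi * (di * di)
      + (h * β * a * h * β) * hdi * (di * di)
      + (h * β) * hha * (β * d * a * di * di * di * di)
      - (h) * hhb * (a * β * d * a * di * di * di * di)
      + h2 * (β * a * β * d * a * di * di * di * di)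
      - (h * β) * hha * (β * d * β * di * γ * di * di * di * di)
      + (h) * hhb * (a * β * d * β * di * γ * di * di * di * di)
      - h2 * (β * a * β * d * β * di * γ * di * di * di * di)
      - 2 * (h * β) * hha * (β * di * di)
      + 2 * (h) * hhb * (a * β * di * di)
      - 2 * h2 * (β * a * β * di * di)
      - (β) * Ldig * (a * di)
      + (β * h * d) * hDh * (di * a * di)
      - (β * h) * hdi * (a * di)
      + hhb * (d * a * di * di * a * di)
      - hhb * (d * β * di * γ * di * di * a * di)
      + (h * β) * r3 * (di * γ * di * di * a * di)
      + (h) * r5 * (d * di * γ * di * di * a * di)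
      + (h * β) * r8 * (di * di * a * di)
      + (h * β * h * β * d) * hDh * (di * di * a * di)
      - (h * β * a) * hdi * (di * a * di)
      - (h * β * h * β) * hdi * (di * a * di)
      + (h) * hhb * (β * d * a * di * di * di * a * di)
      - h2 * (β * β * d * a * di * di * di * a * di)
      - (h) * hhb * (β * d * β * di * γ * di * di * di * a * di)
      + h2 * (β * β * d * β * di * γ * di * di * di * a * di)
      - (h) * hhb * (β * di * a * di)
      + h2 * (β * β * di * a * di)
      - (β * γ) * Ldia * (di)
      - (β * γ * h * β) * hDh * (di * di)
      + (β * γ * h) * r5 * (di * γ * di * di * di)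
      + (β) * hhg * (β * di * di)
      - hhb * (γ * β * di * di)
      - (β) * hhg * (β * a * di * di * di)
      + hhb * (γ * β * a * di * di * di)
      + (h * β) * r7 * (di * di)
      - (h * β * h * β * d) * hDh * (di * di)
      + (h * β * h * β) * hdi * (di)
      - 2 * (h) * hhb * (β * d * a * di * di * di)
      + 2 * h2 * (β * β * d * a * di * di * di)
      + (h) * hhb * (β * d * β * di * γ * di * di * di)
      - h2 * (β * β * d * β * di * γ * di * di * di)
      + (h) * hhb * (β * di)
      - h2 * (β * β * di)
      - (h * β) * r7 * (a * di * di * di)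
      + (h) * r5 * (γ * a * di * di * di)
      + (h * β * h * β * d) * hDh * (a * di * di * di)
      + (h) * hhb * (β * d * a * di * a * di * di * di)
      - h2 * (β * β * d * a * di * a * di * di * di)
      - (h) * hhb * (β * d * β * di * γ * di * a * di * di * di)
      + h2 * (β * β * d * β * di * γ * di * a * di * di * di)
      - (h * β * a) * Ldia * (di)
      - (h * β * a * h * β) * hDh * (di * di)
      + (h * β * a * h) * r5 * (di * γ * di * di * di)
      + (h * β) * hha * (β * a * di * di * di)
      - (h) * hhb * (a * β * a * di * di * di)
      + h2 * (β * a * β * a * di * di * di)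
      + (β) * r2p * (di * di)
      - (β * h * a) * hdi * (di)
      + hhb * (a * a * di * di)
      - hhb * (β * γ * di * di)
  have g2 : Dh * β = β * Dh := by
    linear_combination (norm := noncomm_ring) hDh * (β)
      - (β) * hDh
      + 2 * r5 * (di * γ * di)
      + (a) * Ldib
      + r1 * (di)
      - (β * di * γ) * Ldib
      - (β * di) * r7 * (di)
      + (β * di * h * β * d) * hDh * (di)
      - (β * di * h * β) * hdi
      - (β * di * h * β) * r3 * (di * γ * di * di)
      - (β * di * h) * r5 * (d * di * γ * di * di)
      - (β * di * h * β) * r8 * (di * di)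
      - (β * di * h * β * h * β * d) * hDh * (di * di)
      + (β * di * h * β * a) * hdi * (di)
      + (β * di * h * β * h * β) * hdi * (di)
      - (β * di * h) * hhb * (β * d * a * di * di * di)
      + (β * di) * h2 * (β * β * d * a * di * di * di)
      + (β * di * h) * hhb * (β * d * β * di * γ * di * di * di)
      - (β * di) * h2 * (β * β * d * β * di * γ * di * di * di)
      + (β * di * h) * hhb * (β * di)
      - (β * di) * h2 * (β * β * di)
      - (β) * Ldih * (β)
      - hhb * (di * β)
      + (β) * Ldih * (β * a * di)
      + hhb * (di * β * a * di)
      + (β) * Ldib * (γ * di)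
      + (h * β) * Ldib
      + (h) * r5 * (di)
      - (h * β) * Ldib * (a * di)
      - (h) * r5 * (di * a * di)
  have g3 : Dh * γ = γ * Dh := by
    linear_combination (norm := noncomm_ring) hDh * (γ)
      - (γ) * hDh
      + r7 * (di * γ * di)
      - (h * β * d) * hDh * (di * γ * di)
      + (h * β) * hdi * (γ * di)
      + (h * β) * r3 * (di * γ * di * di * γ * di)
      + (h) * r5 * (d * di * γ * di * di * γ * di)
      + (h * β) * r8 * (di * di * γ * di)
      + (h * β * h * β * d) * hDh * (di * di * γ * di)
      - (h * β * a) * hdi * (di * γ * di)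
      - (h * β * h * β) * hdi * (di * γ * di)
      + (h) * hhb * (β * d * a * di * di * di * γ * di)
      - h2 * (β * β * d * a * di * di * di * γ * di)
      - (h) * hhb * (β * d * β * di * γ * di * di * di * γ * di)
      + h2 * (β * β * d * β * di * γ * di * di * di * γ * di)
      - (h) * hhb * (β * di * γ * di)
      + h2 * (β * β * di * γ * di)
      + (a) * Ldig
      - (a * h * d) * hDh * (di)
      + (a * h) * hdi
      + hha * (d * a * di * di)
      - hha * (d * β * di * γ * di * di)
      - hha
      + (h * a) * r3 * (di * γ * di * di)
      + (h * a * β) * hdi * (γ * di * di)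
      + (h) * r1 * (γ * di * di)
      + (h * a) * r8 * (di * di)
      + (h * a * h * β * d) * hDh * (di * di)
      - (h * a * a) * hdi * (di)
      - (h * a * h * β) * hdi * (di)
      - (h) * hha * (β * d * a * di * di * di)
      + h2 * (a * β * d * a * di * di * di)
      + (h) * hha * (β * d * β * di * γ * di * di * di)
      - h2 * (a * β * d * β * di * γ * di * di * di)
      + (h) * hha * (β * di)
      - h2 * (a * β * di)
      - (β) * Ldig * (di * γ)
      + (β * h * d) * hDh * (di * di * γ)
      - (β * h) * hdi * (di * γ)
      + hhb * (d * a * di * di * di * γ)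
      - hhb * (d * β * di * γ * di * di * di * γ)
      - hhb * (di * γ)
      + (h * β) * r3 * (di * γ * di * di * di * γ)
      + (h) * r5 * (d * di * γ * di * di * di * γ)
      + (h * β) * r8 * (di * di * di * γ)
      + (h * β * h * β * d) * hDh * (di * di * di * γ)
      - (h * β * a) * hdi * (di * di * γ)
      - (h * β * h * β) * hdi * (di * di * γ)
      + (h) * hhb * (β * d * a * di * di * di * di * γ)
      - h2 * (β * β * d * a * di * di * di * di * γ)
      - (h) * hhb * (β * d * β * di * γ * di * di * di * di * γ)
      + h2 * (β * β * d * β * di * γ * di * di * di * di * γ)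
      - (h) * hhb * (β * di * di * γ)
      + h2 * (β * β * di * di * γ)
      - 2 * (β * γ) * Ldig * (di)
      + 2 * (β * γ * h * d) * hDh * (di * di)
      - 2 * (β * γ * h) * hdi * (di)
      + 2 * (β) * hhg * (d * a * di * di * di)
      - 2 * (β) * hhg * (d * β * di * γ * di * di * di)
      - 3 * (β) * hhg * (di)
      + hhb * (γ * di)
      - 2 * (β) * r6 * (di * di)
      + 2 * (β * h * γ * d) * hDh * (di * di)
      - 2 * (β * h * γ) * hdi * (di)
      - 2 * (h * β * a) * Ldig * (di)
      + 2 * (h * β * a * h * d) * hDh * (di * di)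
      - 2 * (h * β * a * h) * hdi * (di)
      - 2 * (h * β) * hha * (d * a * di * di * di)
      + 2 * (h) * hhb * (a * d * a * di * di * di)
      - 2 * h2 * (β * a * d * a * di * di * di)
      + 2 * (h * β) * hha * (d * β * di * γ * di * di * di)
      - 2 * (h) * hhb * (a * d * β * di * γ * di * di * di)
      + 2 * h2 * (β * a * d * β * di * γ * di * di * di)
      + 3 * (h * β) * hha * (di)
      - 2 * (h) * hhb * (a * di)
      + 2 * h2 * (β * a * di)
      - (β * γ * di) * Ldig
      + (β * γ * di * h * d) * hDh * (di)
      - (β * γ * di * h) * hdi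
      - (β * γ * di * h) * r3 * (di * γ * di * di)
      - (β * γ * di * h * β) * hdi * (γ * di * di)
      - (β * γ * di * h) * r8 * (di * di)
      - (β * γ * di) * h2 * (β * d * Dh * di * di)
      + (β * γ * di) * h2 * (β * d * di * di)
      + (β * γ * di * h * a) * hdi * (di)
      - (β * γ) * Ldih
      - (β * γ) * Ldih * (β * γ * di * di)
      - (β) * hhg * (di * β * γ * di * di)
      + hhb * (γ * di * β * γ * di * di)
      + (β * γ) * Ldih * (a * di)
      + (β) * hhg * (di * a * di)
      - hhb * (γ * di * a * di)
      - (h * β * γ) * Ldib * (γ * di * di)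
      - (h * β) * r7 * (di * γ * di * di)
      + (h) * r5 * (γ * di * γ * di * di)
      + (h * β * h * β * d) * hDh * (di * γ * di * di)
      - (h * β * h * β) * hdi * (γ * di * di)
      + (h) * hhb * (β * d * a * di * di * γ * di * di)
      - h2 * (β * β * d * a * di * di * γ * di * di)
      - (h) * hhb * (β * d * β * di * γ * di * di * γ * di * di)
      + h2 * (β * β * d * β * di * γ * di * di * γ * di * di)
      + (h * β * γ) * Ldia * (di)
      + (h * β * γ * h * β) * hDh * (di * di)
      - (h * β * γ * h) * r5 * (di * γ * di * di * di)
      - (h * β) * hhg * (β * di * di)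
      + (h) * hhb * (γ * β * di * di)
      - h2 * (β * γ * β * di * di)
      + (h * β) * hhg * (β * a * di * di * di)
      - (h) * hhb * (γ * β * a * di * di * di)
      + h2 * (β * γ * β * a * di * di * di)
      + (h * β) * Ldig
      - (h * β * h * d) * hDh * (di)
      + (h * β * h) * hdi
      - (h) * hhb * (d * a * di * di)
      + h2 * (β * d * a * di * di)
      + (h) * hhb * (d * β * di * γ * di * di)
      - h2 * (β * d * β * di * γ * di * di)
      + (h) * hhb
      - h2 * (β)
      - (h * β * a * di) * Ldig
      + (h * β * a * di * h * d) * hDh * (di)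
      - (h * β * a * di * h) * hdi
      - (h * β * a * di * h) * r3 * (di * γ * di * di)
      - (h * β * a * di * h * β) * hdi * (γ * di * di)
      - (h * β * a * di * h) * r8 * (di * di)
      - (h * β * a * di) * h2 * (β * d * Dh * di * di)
      + (h * β * a * di) * h2 * (β * d * di * di)
      + (h * β * a * di * h * a) * hdi * (di)
      - (h * β * a) * Ldih
      - (h * β * a) * Ldih * (β * γ * di * di)
      + (h * β) * hha * (di * β * γ * di * di)
      - (h) * hhb * (a * di * β * γ * di * di)
      + h2 * (β * a * di * β * γ * di * di)
      + (h * β * a) * Ldih * (a * di)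
      - (h * β) * hha * (di * a * di)
      + (h) * hhb * (a * di * a * di)
      - h2 * (β * a * di * a * di)
      + r2p * (di)
      - (h * a) * hdi
      - (h * β) * r2p * (di * di)
      + (h * β * h * a) * hdi * (di)
      - (h) * hhb * (a * a * di * di)
      + h2 * (β * a * a * di * di)
  have g4 : Dh * d = d * Dh := by
    linear_combination (norm := noncomm_ring) hDh * (d)
      - (d) * hDh
      + (a) * hid
      - (β * di * γ) * hid
      + r3 * (di * γ * di)
      + (β) * hdi * (γ * di)
      + r8 * (di)
      + (h * β * d) * hDh * (di)
      - (a) * hdi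
      - (h * β) * hdi
      - (β) * Ldig
      + (β * h * d) * hDh * (di)
      - (β * h) * hdi
      + hhb * (d * a * di * di)
      - hhb * (d * β * di * γ * di * di)
      - hhb
  exact ⟨g1, g2, g3, g4⟩
end

section
/- In the algebra generated by the differentials α, b, c, δ with the Gr_h(1|1) relations, the element D̂ = b c⁻¹ − α c⁻¹ δ c⁻¹ commutes with each of α, b, c, δ. -/
set_option maxRecDepth 4000
set_option maxHeartbeats 2000000

/-- In the Gr_h(1|1) algebra of differentials, the element
`D̂ = b c⁻¹ − α c⁻¹ δ c⁻¹` commutes with each of `α, b, c, δ`. -/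
theorem stmt8 (R : Type*) [Ring R]
    (α b c δ h bi ci Dhat : R)
    (h2 : h * h = 0) (hhα : h * α = -(α * h)) (hhδ : h * δ = -(δ * h))
    (hhb : h * b = b * h) (hhc : h * c = c * h)
    (hbi : b * bi = 1) (hib : bi * b = 1)
    (hci : c * ci = 1) (hic : ci * c = 1)
    (hDhat : Dhat = b * ci - α * ci * δ * ci)
    (r1 : α * b = b * α + h * (b * b))
    (r2 : α * c = c * α + h * (c * b + δ * α))
    (r3 : δ * b = b * δ - h * (b * b))
    (r4 : δ * c = c * δ - h * (c * b - α * δ))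
    (r5 : α * α = h * (α * b))
    (r6 : α * δ = -(δ * α) + h * ((δ - α) * b))
    (r7 : δ * δ = -(h * (δ * b)))
    (r8 : b * c = c * b + h * ((δ + α) * b)) :
    Dhat * α = α * Dhat ∧ Dhat * b = b * Dhat ∧
    Dhat * c = c * Dhat ∧ Dhat * δ = δ * Dhat := by
  -- h commutes with ci
  have hhci : h * ci = ci * h := by
    have h1 : c * (h * ci) = h := by
      rw [← mul_assoc, ← hhc, mul_assoc, hci, mul_one]
    calc h * ci = (ci * c) * (h * ci) := by rw [hic, one_mul]
      _ = ci * (c * (h * ci)) := by rw [mul_assoc]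
      _ = ci * h := by rw [h1]
  -- h-push rules (universally quantified)
  have Hh : ∀ t : R, h * (h * t) = 0 := fun t => by rw [← mul_assoc, h2, zero_mul]
  have HA : ∀ t : R, h * (α * t) = -(α * (h * t)) := fun t => by
    rw [← mul_assoc, hhα, neg_mul, mul_assoc]
  have HD : ∀ t : R, h * (δ * t) = -(δ * (h * t)) := fun t => by
    rw [← mul_assoc, hhδ, neg_mul, mul_assoc]
  have HB : ∀ t : R, h * (b * t) = b * (h * t) := fun t => by
    rw [← mul_assoc, hhb, mul_assoc]
  have HC : ∀ t : R, h * (c * t) = c * (h * t) := fun t => by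
    rw [← mul_assoc, hhc, mul_assoc]
  have HCi : ∀ t : R, h * (ci * t) = ci * (h * t) := fun t => by
    rw [← mul_assoc, hhci, mul_assoc]
  -- cancellation rules
  have IC : ∀ t : R, ci * (c * t) = t := fun t => by rw [← mul_assoc, hic, one_mul]
  have CI : ∀ t : R, c * (ci * t) = t := fun t => by rw [← mul_assoc, hci, one_mul]
  -- quantified versions of the relations
  have R1 : ∀ t : R, α * (b * t) = b * (α * t) + h * ((b * b) * t) := fun t => by
    rw [← mul_assoc, r1, add_mul, mul_assoc, mul_assoc]
  have R2 : ∀ t : R, α * (c * t) = c * (α * t) + h * ((c * b + δ * α) * t) := fun t => by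
    rw [← mul_assoc, r2, add_mul, mul_assoc, mul_assoc]
  have R3 : ∀ t : R, δ * (b * t) = b * (δ * t) - h * ((b * b) * t) := fun t => by
    rw [← mul_assoc, r3, sub_mul, mul_assoc, mul_assoc]
  have R4 : ∀ t : R, δ * (c * t) = c * (δ * t) - h * ((c * b - α * δ) * t) := fun t => by
    rw [← mul_assoc, r4, sub_mul, mul_assoc, mul_assoc]
  have R5 : ∀ t : R, α * (α * t) = h * ((α * b) * t) := fun t => by
    rw [← mul_assoc, r5, mul_assoc]
  have R6 : ∀ t : R, α * (δ * t) = -(δ * (α * t)) + h * (((δ - α) * b) * t) := fun t => by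
    rw [← mul_assoc, r6, add_mul, neg_mul, mul_assoc, mul_assoc]
  have R7 : ∀ t : R, δ * (δ * t) = -(h * ((δ * b) * t)) := fun t => by
    rw [← mul_assoc, r7, neg_mul, mul_assoc]
  have R8 : ∀ t : R, b * (c * t) = c * (b * t) + h * (((δ + α) * b) * t) := fun t => by
    rw [← mul_assoc, r8, add_mul, mul_assoc, mul_assoc]
  -- moving generators past ci (exact, unnormalized)
  have e2 : c * α = α * c - h * (c * b + δ * α) := by rw [r2]; abel
  have e4 : c * δ = δ * c + h * (c * b - α * δ) := by rw [r4]; abel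
  have e8 : c * b = b * c - h * ((δ + α) * b) := by rw [r8]; abel
  have Mα₀ : α * ci = ci * α - ci * ((h * (c * b + δ * α)) * ci) := by
    have e0 : α * ci = ci * ((c * α) * ci) := by
      rw [← mul_assoc, ← mul_assoc, hic, one_mul]
    rw [e0, e2, sub_mul, mul_sub, mul_assoc α c ci, hci, mul_one]
  have Mδ₀ : δ * ci = ci * δ + ci * ((h * (c * b - α * δ)) * ci) := by
    have e0 : δ * ci = ci * ((c * δ) * ci) := by
      rw [← mul_assoc, ← mul_assoc, hic, one_mul]
    rw [e0, e4, add_mul, mul_add, mul_assoc δ c ci, hci, mul_one]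
  have Mb₀ : b * ci = ci * b - ci * ((h * ((δ + α) * b)) * ci) := by
    have e0 : b * ci = ci * ((c * b) * ci) := by
      rw [← mul_assoc, ← mul_assoc, hic, one_mul]
    rw [e0, e8, sub_mul, mul_sub, mul_assoc b c ci, hci, mul_one]
  have Mα₀' : ∀ t : R, α * (ci * t) =
      ci * (α * t) - ci * (((h * (c * b + δ * α)) * ci) * t) := fun t => by
    rw [← mul_assoc, Mα₀, sub_mul, mul_assoc, mul_assoc]
  have Mδ₀' : ∀ t : R, δ * (ci * t) =
      ci * (δ * t) + ci * (((h * (c * b - α * δ)) * ci) * t) := fun t => by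
    rw [← mul_assoc, Mδ₀, add_mul, mul_assoc, mul_assoc]
  have Mb₀' : ∀ t : R, b * (ci * t) =
      ci * (b * t) - ci * (((h * ((δ + α) * b)) * ci) * t) := fun t => by
    rw [← mul_assoc, Mb₀, sub_mul, mul_assoc, mul_assoc]
  subst hDhat
  refine ⟨?_, ?_, ?_, ?_⟩ <;>
  · simp only [mul_assoc, mul_add, add_mul, mul_sub, sub_mul, mul_neg, neg_mul, neg_neg, mul_one, one_mul, h2, hhα, hhδ, hhb, hhc, hhci, Hh, HA, HD, HB, HC, HCi, IC, CI, hic, hci, R1, R2, R3, R4, R5, R6, R7, R8, r1, r2, r3, r4, r5, r6, r7, r8, mul_zero, zero_mul, neg_zero, add_zero, zero_add, sub_zero, zero_sub]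
    simp only [Mα₀, Mδ₀, Mb₀, Mα₀', Mδ₀', Mb₀']
    simp only [mul_assoc, mul_add, add_mul, mul_sub, sub_mul, mul_neg, neg_mul, neg_neg, mul_one, one_mul, h2, hhα, hhδ, hhb, hhc, hhci, Hh, HA, HD, HB, HC, HCi, IC, CI, hic, hci, R1, R2, R3, R4, R5, R6, R7, R8, r1, r2, r3, r4, r5, r6, r7, r8, mul_zero, zero_mul, neg_zero, add_zero, zero_add, sub_zero, zero_sub]
    simp only [Mα₀, Mδ₀, Mb₀, Mα₀', Mδ₀', Mb₀']
    simp only [mul_assoc, mul_add, add_mul, mul_sub, sub_mul, mul_neg, neg_mul, neg_neg, mul_one, one_mul, h2, hhα, hhδ, hhb, hhc, hhci, Hh, HA, HD, HB, HC, HCi, IC, CI, hic, hci, R1, R2, R3, R4, R5, R6, R7, R8, r1, r2, r3, r4, r5, r6, r7, r8, mul_zero, zero_mul, neg_zero, add_zero, zero_add, sub_zero, zero_sub]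
    simp only [Mα₀, Mδ₀, Mb₀, Mα₀', Mδ₀', Mb₀']
    simp only [mul_assoc, mul_add, add_mul, mul_sub, sub_mul, mul_neg, neg_mul, neg_neg, mul_one, one_mul, h2, hhα, hhδ, hhb, hhc, hhci, Hh, HA, HD, HB, HC, HCi, IC, CI, hic, hci, R1, R2, R3, R4, R5, R6, R7, R8, r1, r2, r3, r4, r5, r6, r7, r8, mul_zero, zero_mul, neg_zero, add_zero, zero_add, sub_zero, zero_sub]
    simp only [Mα₀, Mδ₀, Mb₀, Mα₀', Mδ₀', Mb₀']
    simp only [mul_assoc, mul_add, add_mul, mul_sub, sub_mul, mul_neg, neg_mul, neg_neg, mul_one, one_mul, h2, hhα, hhδ, hhb, hhc, hhci, Hh, HA, HD, HB, HC, HCi, IC, CI, hic, hci, R1, R2, R3, R4, R5, R6, R7, R8, r1, r2, r3, r4, r5, r6, r7, r8, mul_zero, zero_mul, neg_zero, add_zero, zero_add, sub_zero, zero_sub]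
    abel
end

section
/- In the GL_h(1|1) algebra extended by the entries A, B, C, D of T⁻¹, the relation aC = Ca + h(1 − D_h) holds, where D_h = ad⁻¹ − βd⁻¹γd⁻¹, given the explicit formulas A = a⁻¹ + a⁻¹βd⁻¹γa⁻¹, B = −a⁻¹βd⁻¹, C = −d⁻¹γa⁻¹, D = d⁻¹ + d⁻¹γa⁻¹βd⁻¹ and the defining relations of GL_h(1|1). -/
/-- In the GL_h(1|1) algebra extended by the entries of `T⁻¹`,
with `C = −d⁻¹γa⁻¹`, the relation `aC = Ca + h(1 − D_h)` holds. -/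
theorem stmt16 (R : Type*) [Ring R]
    (a β γ d h ai di Dh Di : R)
    (h2 : h * h = 0) (hhb : h * β = -(β * h)) (hhg : h * γ = -(γ * h))
    (hha : h * a = a * h) (hhd : h * d = d * h)
    (hai : a * ai = 1) (hia : ai * a = 1)
    (hdi : d * di = 1) (hid : di * d = 1)
    (hDh : Dh = a * di - β * di * γ * di)
    (hDu : Dh * Di = 1) (hDu' : Di * Dh = 1)
    (hDc1 : Dh * a = a * Dh) (hDc2 : Dh * β = β * Dh)
    (hDc3 : Dh * γ = γ * Dh) (hDc4 : Dh * d = d * Dh)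
    (r1 : a * β = β * a)
    (r2 : a * γ = γ * a + h * (a * a) * (1 - Di))
    (r3 : d * β = β * d)
    (r4 : d * γ = γ * d + h * (d * d) * (Dh - 1))
    (r5 : β * β = 0)
    (r6 : γ * γ = h * (γ * d) * (1 - Dh))
    (r7 : β * γ = -(γ * β) + h * (β * d) * (1 - Dh))
    (r8 : a * d = d * a + h * (β * d) * (Dh - 1)) :
    let C := -(di * γ * ai)
    a * C = C * a + h * (1 - Dh) := by
  intro C
  -- generic lemma: inverses commute with whatever the element commutes with
  have inv_comm : ∀ x xi y : R, x * xi = 1 → xi * x = 1 → x * y = y * x → xi * y = y * xi := by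
    intro x xi y e1 e2 e3
    calc xi * y = xi * y * (x * xi) := by rw [e1, mul_one]
      _ = xi * (y * x) * xi := by noncomm_ring
      _ = xi * (x * y) * xi := by rw [← e3]
      _ = y * xi := by rw [← mul_assoc xi x y, e2, one_mul]
  have H2 : di * h = h * di := inv_comm d di h hdi hid hhd.symm
  have H4 : di * Dh = Dh * di := inv_comm d di Dh hdi hid hDc4.symm
  have H7 : di * β = β * di := inv_comm d di β hdi hid r3
  have H8 : ai * β = β * ai := inv_comm a ai β hai hia r1
  have H5 : Di * a = a * Di := inv_comm Dh Di a hDu hDu' hDc1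
  have H5' : Di * ai = ai * Di := (inv_comm a ai Di hai hia H5.symm).symm
  -- moving h across di
  have Hdh : ∀ x : R, di * (h * x) = h * (di * x) := fun x => by
    rw [← mul_assoc, H2, mul_assoc]
  -- small commutators
  have c1i : (1 - Di) * ai = ai * (1 - Di) := by
    rw [sub_mul, one_mul, mul_sub, mul_one, H5']
  have cDg : (Dh - 1) * γ = γ * (Dh - 1) := by
    rw [sub_mul, one_mul, mul_sub, mul_one, hDc3]
  have cDdi : (Dh - 1) * di = di * (Dh - 1) := by
    rw [sub_mul, one_mul, mul_sub, mul_one, ← H4]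
  -- K3' : di * a = a * di + h * (di * (β * (Dh - 1)))
  have K3' : di * a = a * di + h * (di * (β * (Dh - 1))) := by
    calc di * a
        = di * ((a * d) * di) := by rw [mul_assoc a d di, hdi, mul_one]
      _ = di * ((d * a + h * (β * d) * (Dh - 1)) * di) := by rw [r8]
      _ = (di * d) * (a * di) + di * (h * (β * (d * ((Dh - 1) * di)))) := by noncomm_ring
      _ = (di * d) * (a * di) + di * (h * (β * (d * (di * (Dh - 1))))) := by rw [cDdi]
      _ = (di * d) * (a * di) + di * (h * (β * ((d * di) * (Dh - 1)))) := by
          rw [mul_assoc d di (Dh - 1)]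
      _ = a * di + h * (di * (β * (Dh - 1))) := by rw [hid, one_mul, hdi, one_mul, Hdh]
  have K3 : a * di = di * a - h * (di * (β * (Dh - 1))) := by rw [K3']; noncomm_ring
  have hadi : a * di = Dh + β * di * γ * di := by rw [hDh]; noncomm_ring
  -- h * (β * γ) = -(h * (γ * β))
  have K7 : h * (β * γ) = -(h * (γ * β)) := by
    rw [r7, mul_add, mul_neg,
        show h * (h * (β * d) * (1 - Dh)) = (h * h) * ((β * d) * (1 - Dh)) from by noncomm_ring,
        h2, zero_mul, add_zero]
  have Kc : h * (di * (β * γ)) = -(h * (di * (γ * β))) := by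
    rw [← Hdh, K7, mul_neg, Hdh]
  -- β * Dh = β * (a * di)
  have KbD : β * Dh = β * (a * di) := by
    rw [hDh, mul_sub,
        show β * (β * di * γ * di) = (β * β) * (di * γ * di) from by noncomm_ring, r5,
        zero_mul, sub_zero]
  -- β * di * Di = β * ai
  have KbDi : β * di * Di = β * ai := by
    have e1 : β * ai * Dh = β * di := by
      calc β * ai * Dh = ai * (β * Dh) := by rw [← mul_assoc ai β Dh, H8]
        _ = ai * (β * (a * di)) := by rw [KbD]
        _ = (ai * β) * a * di := by noncomm_ring
        _ = β * (ai * a) * di := by rw [H8]; noncomm_ring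
        _ = β * di := by rw [hia, mul_one]
    calc β * di * Di = β * ai * Dh * Di := by rw [e1]
      _ = β * ai * (Dh * Di) := by rw [mul_assoc]
      _ = β * ai := by rw [hDu, mul_one]
  -- β * (Dh * ai) = β * di
  have e2 : β * (Dh * ai) = β * di := by
    calc β * (Dh * ai) = (β * Dh) * ai := by rw [← mul_assoc]
      _ = (β * (a * di)) * ai := by rw [KbD]
      _ = β * ((a * di) * ai) := by rw [mul_assoc]
      _ = β * ((di * a - h * (di * (β * (Dh - 1)))) * ai) := by rw [K3]
      _ = (β * di) * (a * ai) - (β * h) * ((di * (β * (Dh - 1))) * ai) := by noncomm_ring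
      _ = β * di - (β * h) * ((di * (β * (Dh - 1))) * ai) := by rw [hai, mul_one]
      _ = β * di := by
          rw [show (β : R) * h = -(h * β) from by rw [hhb, neg_neg],
              show (-(h * β)) * ((di * (β * (Dh - 1))) * ai)
                = -((h * ((β * di) * (β * (Dh - 1)))) * ai) from by noncomm_ring,
              ← H7,
              show h * ((di * β) * (β * (Dh - 1))) = (h * di) * ((β * β) * (Dh - 1)) from by
                noncomm_ring,
              r5]
          noncomm_ring
  have eL : β * (di * (1 - Di)) = β * di - β * ai := by
    rw [mul_sub, mul_one, mul_sub, ← mul_assoc β di Di, KbDi]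
  have eR : β * ((Dh - 1) * ai) = β * di - β * ai := by
    rw [sub_mul, one_mul, mul_sub, ← mul_assoc β Dh ai, mul_assoc β Dh ai, e2]
  have A : h * ((β * di * γ * di) * (1 - Di)) = -((h * (di * (γ * β))) * (di * (1 - Di))) := by
    calc h * ((β * di * γ * di) * (1 - Di))
        = (h * ((β * di) * γ)) * (di * (1 - Di)) := by noncomm_ring
      _ = (h * ((di * β) * γ)) * (di * (1 - Di)) := by rw [← H7]
      _ = (h * (di * (β * γ))) * (di * (1 - Di)) := by rw [mul_assoc di β γ]
      _ = (-(h * (di * (γ * β)))) * (di * (1 - Di)) := by rw [Kc]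
      _ = -((h * (di * (γ * β))) * (di * (1 - Di))) := by rw [neg_mul]
  -- main identity
  have main : a * (di * γ * ai) = di * γ - h + h * Dh := by
    calc a * (di * γ * ai)
        = (a * di) * (γ * ai) := by noncomm_ring
      _ = (di * a - h * (di * (β * (Dh - 1)))) * (γ * ai) := by rw [K3]
      _ = di * ((a * γ) * ai) - h * (di * (β * ((Dh - 1) * (γ * ai)))) := by noncomm_ring
      _ = di * ((a * γ) * ai) - h * (di * (β * (γ * ((Dh - 1) * ai)))) := by
          rw [show (Dh - 1) * (γ * ai) = γ * ((Dh - 1) * ai) from by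
            rw [← mul_assoc, cDg, mul_assoc]]
      _ = di * ((γ * a + h * (a * a) * (1 - Di)) * ai)
            - h * (di * (β * (γ * ((Dh - 1) * ai)))) := by rw [r2]
      _ = (di * γ) * (a * ai) + di * (h * ((a * a) * ((1 - Di) * ai)))
            - h * (di * ((β * γ) * ((Dh - 1) * ai))) := by noncomm_ring
      _ = di * γ + h * (di * ((a * a) * (ai * (1 - Di))))
            - h * (di * ((β * γ) * ((Dh - 1) * ai))) := by rw [hai, mul_one, Hdh, c1i]
      _ = di * γ + h * (di * (a * (1 - Di)))
            - h * (di * ((β * γ) * ((Dh - 1) * ai))) := by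
          rw [show (a * a) * (ai * (1 - Di)) = a * ((a * ai) * (1 - Di)) from by noncomm_ring,
              hai, one_mul]
      _ = di * γ + h * (di * (a * (1 - Di)))
            + (h * (di * (γ * β))) * ((Dh - 1) * ai) := by
          rw [show h * (di * ((β * γ) * ((Dh - 1) * ai)))
                = (h * (di * (β * γ))) * ((Dh - 1) * ai) from by noncomm_ring, Kc]
          noncomm_ring
      _ = di * γ + h * ((a * di) * (1 - Di))
            + (h * (di * (γ * β))) * ((Dh - 1) * ai) := by
          rw [show h * (di * (a * (1 - Di))) = (h * (di * a)) * (1 - Di) from by noncomm_ring,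
              K3',
              show (h * (a * di + h * (di * (β * (Dh - 1))))) * (1 - Di)
                = h * ((a * di) * (1 - Di))
                  + ((h * h) * (di * (β * (Dh - 1)))) * (1 - Di) from by noncomm_ring,
              h2]
          noncomm_ring
      _ = di * γ + h * (Dh * (1 - Di)) + h * ((β * di * γ * di) * (1 - Di))
            + (h * (di * (γ * β))) * ((Dh - 1) * ai) := by
          rw [hadi]; noncomm_ring
      _ = di * γ + (h * Dh - h) + h * ((β * di * γ * di) * (1 - Di))
            + (h * (di * (γ * β))) * ((Dh - 1) * ai) := by
          rw [show Dh * (1 - Di) = Dh - 1 from by rw [mul_sub, mul_one, hDu], mul_sub, mul_one]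
      _ = di * γ + (h * Dh - h) - h * (di * (γ * (β * (di * (1 - Di)))))
            + h * (di * (γ * (β * ((Dh - 1) * ai)))) := by
          rw [A]; noncomm_ring
      _ = di * γ + (h * Dh - h) - h * (di * (γ * (β * di - β * ai)))
            + h * (di * (γ * (β * di - β * ai))) := by rw [eL, eR]
      _ = di * γ - h + h * Dh := by noncomm_ring
  -- conclude
  have hR : di * γ * ai * a = di * γ := by rw [mul_assoc (di * γ) ai a, hia, mul_one]
  show a * -(di * γ * ai) = -(di * γ * ai) * a + h * (1 - Dh)
  rw [mul_neg, main, neg_mul, hR]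
  noncomm_ring
end
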